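/- arXiv:0912.2929 — 5 statements merged into one kernel-verified Lean document; each statement's English description precedes it below -/
import Mathlib

section
/- Let M be a loopless matroid on a finite set E with |E| = m elements and rank r(M) = r. If there exists a cyclic ordering e₁, …, e_m of the elements of E (a bijection from ZMod m to E) such that every r cyclically consecutive elements form a base of M, then for every subset A ⊆ E we have r · |A| ≤ m · r(A). -/
open Set

/-- The rank of a set `A` in a matroid `M`: the largest size of an independent subset of `A`. -/
noncomputable def mRank {α : Type*} (M : Matroid α) (A : Set α) : ℕ :=
  sSup {n : ℕ | ∃ I ⊆ A, M.Indep I ∧ I.ncard = n}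

/-- The cyclic interval of `w` consecutive residues starting at `s` in `ZMod D`. -/
def cycInt {D : ℕ} (w : ℕ) (s : ZMod D) : Set (ZMod D) :=
  {x | ∃ k : ℕ, k < w ∧ x = s + (k : ZMod D)}

/-! Since `r ≤ m`, every element lies in exactly `r` of the `m` cyclic windows
`σ i, …, σ (i + r - 1)`. Each window is a base, so it meets `A` in an independent set of size at
most `r(A)`. Double counting the pairs `(a, i)` with `a ∈ A` in window `i` gives
`r |A| ≤ m r(A)`. -/

section mRank

variable {α : Type*} [Finite α]

lemma bddAbove_ncard_indep_subset (M : Matroid α) (A : Set α) :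
    BddAbove {n : ℕ | ∃ I ⊆ A, M.Indep I ∧ I.ncard = n} :=
  ⟨Nat.card α, by rintro n ⟨I, -, -, rfl⟩; exact ncard_le_card I⟩

lemma mRank_le_nat_card (M : Matroid α) (A : Set α) : mRank M A ≤ Nat.card α :=
  csSup_le ⟨0, ∅, empty_subset A, M.empty_indep, ncard_empty α⟩
    (by rintro n ⟨I, -, -, rfl⟩; exact ncard_le_card I)

lemma Matroid.Indep.ncard_le_mRank {M : Matroid α} {I A : Set α} (hI : M.Indep I)
    (hIA : I ⊆ A) :
    I.ncard ≤ mRank M A :=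
  le_csSup (bddAbove_ncard_indep_subset M A) ⟨I, hIA, hI, rfl⟩

theorem mul_card_le_mul_mRank_of_forall_ncard_eq (M : Matroid α) {ι : Type*} [Fintype ι]
    (B : ι → Set α) (hB : ∀ i, M.Indep (B i)) {k : ℕ} (hk : ∀ a, {i | a ∈ B i}.ncard = k)
    (A : Finset α) :
    k * A.card ≤ Fintype.card ι * mRank M A := by
  classical
  have hcount : ∀ a, (Finset.univ.bipartiteAbove (fun a i ↦ a ∈ B i) a).card = k := fun a ↦ by
    rw [← hk a, ← ncard_coe_finset]
    simp [Finset.bipartiteAbove]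
  have hinter : ∀ i, (A.bipartiteBelow (fun a i ↦ a ∈ B i) i).card ≤ mRank M A := fun i ↦ by
    have hcoe : (A.bipartiteBelow (fun a i ↦ a ∈ B i) i : Set α) = (A : Set α) ∩ B i := by
      ext; simp [Finset.bipartiteBelow]
    rw [← ncard_coe_finset, hcoe]
    exact ((hB i).subset inter_subset_right).ncard_le_mRank inter_subset_left
  calc k * A.card = ∑ a ∈ A, (Finset.univ.bipartiteAbove (fun a i ↦ a ∈ B i) a).card := by
        simp [hcount, mul_comm]
    _ = ∑ i, (A.bipartiteBelow (fun a i ↦ a ∈ B i) i).card :=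
        Finset.sum_card_bipartiteAbove_eq_sum_card_bipartiteBelow _
    _ ≤ Fintype.card ι * mRank M A := by
        simpa using Finset.sum_le_sum fun i (_ : i ∈ Finset.univ) ↦ hinter i

end mRank

lemma ncard_setOf_mem_cycInt {m w : ℕ} (hw : w ≤ m) (a : ZMod m) :
    {i | a ∈ cycInt w i}.ncard = w := by
  have himage : {i | a ∈ cycInt w i} = (fun k : ℕ ↦ a - k) '' Iio w := by
    ext i
    simp only [cycInt, mem_ofPred_eq, mem_image, mem_Iio]
    exact exists_congr fun k ↦ and_congr_right fun _ ↦ by rw [sub_eq_iff_eq_add]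
  have hinj : InjOn (fun k : ℕ ↦ a - k) (Iio w) := fun k hk l hl hkl ↦ by
    have hmod := (ZMod.natCast_eq_natCast_iff' k l m).mp (sub_right_injective hkl)
    rwa [Nat.mod_eq_of_lt (lt_of_lt_of_le hk hw), Nat.mod_eq_of_lt (lt_of_lt_of_le hl hw)] at hmod
  rw [himage, hinj.ncard_image, ncard_Iio_nat]

theorem stmt_2_general {α : Type*} [Fintype α] (M : Matroid α) (m r : ℕ)
    (hr : r = mRank M Set.univ)
    (σ : ZMod m ≃ α)
    (hσ : ∀ i : ZMod m, M.IsBase (σ '' cycInt r i)) :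
    ∀ A : Finset α, r * A.card ≤ m * mRank M (A : Set α) := by
  intro A
  -- `ZMod 0 = ℤ` is infinite, so it cannot be in bijection with `α`.
  have : NeZero m := ⟨by
    rintro rfl
    have : Finite ℤ := σ.finite_iff.mpr inferInstance
    exact not_finite ℤ⟩
  have hrm : r ≤ m := by
    rw [hr, ← Nat.card_zmod m, Nat.card_congr σ]
    exact mRank_le_nat_card M univ
  have hk : ∀ a, {i | a ∈ σ '' cycInt r i}.ncard = r := fun a ↦ by
    simpa [σ.injective.mem_set_image] using ncard_setOf_mem_cycInt hrm (σ.symm a)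
  simpa using mul_card_le_mul_mRank_of_forall_ncard_eq M _ (fun i ↦ (hσ i).indep) hk A

theorem stmt_2 {α : Type*} [Fintype α] (M : Matroid α) (hE : M.E = Set.univ)
    (hloop : ∀ e : α, M.Indep {e}) (m r : ℕ)
    (hm : m = Fintype.card α) (hr : r = mRank M Set.univ)
    (σ : ZMod m ≃ α)
    (hσ : ∀ i : ZMod m, M.IsBase (σ '' cycInt r i)) :
    ∀ A : Finset α, r * A.card ≤ m * mRank M (A : Set α) :=
  stmt_2_general M m r hr σ hσ
end

section
/- Let M be a loopless matroid on a finite nonempty set E. Then the arboricity Υ(M) (the minimum number of bases covering E) equals ⌈γ(M)⌉, where γ(M) = max over nonempty A ⊆ E of |A| / r(A). -/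
open Set

/-!
A finite set `E` is covered by `k` independent sets iff `|A| ≤ k · r(A)` for every `A ⊆ E`
(Edmonds). Necessity is counting. For sufficiency, apply the matroid intersection theorem to the
direct sum of `k` copies of the matroid, on `E × Fin k`, and the partition matroid that takes at
most one copy of each element: a common independent set of size `|E|` picks one copy of every
element, and its `k` layers are the covering independent sets. The intersection theorem is proved
by induction on the ground set, deleting or contracting one element and merging the two deficient
sets by submodularity.

In a loopless matroid `r(A) ≥ 1` for nonempty `A`, so the covering condition says exactly
`γ ≤ k`, and the least such `k` is `⌈γ⌉`; independent sets extend to bases.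
-/

open Finset

/-- A matroid presented by its independent finsets. The `ℕ`-valued rank `rk` keeps the rank
arithmetic of the intersection theorem within `omega`. -/
structure FinMatroid (β : Type*) [DecidableEq β] where
  Indep : Finset β → Prop
  indep_empty : Indep ∅
  indep_subset : ∀ ⦃I J : Finset β⦄, Indep J → I ⊆ J → Indep I
  indep_aug : ∀ ⦃I J : Finset β⦄, Indep I → Indep J → I.card < J.card →
    ∃ x ∈ J, x ∉ I ∧ Indep (insert x I)

namespace FinMatroid

section Rank

variable {β : Type*} [DecidableEq β] (S : FinMatroid β)

open Classical in
noncomputable def rk (A : Finset β) : ℕ :=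
  (A.powerset.filter S.Indep).sup card

variable {S}

lemma card_le_rk {A I : Finset β} (hIA : I ⊆ A) (hI : S.Indep I) : I.card ≤ S.rk A := by
  classical
  exact le_sup (f := card) (mem_filter.2 ⟨mem_powerset.2 hIA, hI⟩)

variable (S)

@[simp]
lemma rk_empty : S.rk ∅ = 0 := by
  simp [rk]

lemma exists_indep_card_eq_rk (A : Finset β) : ∃ I ⊆ A, S.Indep I ∧ I.card = S.rk A := by
  classical
  obtain ⟨I, hI, hIc⟩ := exists_mem_eq_sup (A.powerset.filter S.Indep)
    ⟨∅, mem_filter.2 ⟨empty_mem_powerset A, S.indep_empty⟩⟩ card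
  rw [mem_filter, Finset.mem_powerset] at hI
  exact ⟨I, hI.1, hI.2, hIc.symm⟩

lemma rk_mono {A B : Finset β} (h : A ⊆ B) : S.rk A ≤ S.rk B := by
  obtain ⟨I, hIA, hI, hIc⟩ := S.exists_indep_card_eq_rk A
  exact hIc ▸ card_le_rk (hIA.trans h) hI

lemma exists_indep_superset_card_eq_rk {I A : Finset β} (hIA : I ⊆ A) (hI : S.Indep I) :
    ∃ J, I ⊆ J ∧ J ⊆ A ∧ S.Indep J ∧ J.card = S.rk A := by
  classical
  obtain ⟨J, hJ, hmax⟩ :=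
    (A.powerset.filter fun J => I ⊆ J ∧ S.Indep J).exists_max_image card
      ⟨I, mem_filter.2 ⟨mem_powerset.2 hIA, subset_rfl, hI⟩⟩
  simp only [mem_filter, Finset.mem_powerset] at hJ hmax
  obtain ⟨hJA, hIJ, hJind⟩ := hJ
  refine ⟨J, hIJ, hJA, hJind, (card_le_rk hJA hJind).antisymm (not_lt.1 fun hlt => ?_)⟩
  obtain ⟨K, hKA, hK, hKc⟩ := S.exists_indep_card_eq_rk A
  obtain ⟨x, hxK, hxJ, hins⟩ := S.indep_aug hJind hK (hKc ▸ hlt)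
  have := hmax (insert x J)
    ⟨Finset.insert_subset (hKA hxK) hJA, hIJ.trans (Finset.subset_insert x J), hins⟩
  rw [card_insert_of_notMem hxJ] at this
  omega

lemma rk_union_add_rk_inter_le (A B : Finset β) :
    S.rk (A ∪ B) + S.rk (A ∩ B) ≤ S.rk A + S.rk B := by
  obtain ⟨I, hIAB, hI, hIc⟩ := S.exists_indep_card_eq_rk (A ∩ B)
  obtain ⟨J, hIJ, hJAB, hJ, hJc⟩ :=
    S.exists_indep_superset_card_eq_rk (hIAB.trans Finset.inter_subset_union) hI
  have hsplit : (J ∩ A).card + (J ∩ B).card = J.card + (J ∩ (A ∩ B)).card := by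
    rw [← card_union_add_card_inter, ← Finset.inter_union_distrib_left,
      Finset.inter_eq_left.2 hJAB]
    congr 2
    ext x
    simp only [Finset.mem_inter]
    tauto
  have hA := card_le_rk Finset.inter_subset_right
    (S.indep_subset hJ (Finset.inter_subset_left (s₂ := A)))
  have hB := card_le_rk Finset.inter_subset_right
    (S.indep_subset hJ (Finset.inter_subset_left (s₂ := B)))
  have hI' := Finset.card_le_card (Finset.subset_inter hIJ hIAB)
  omega

lemma rk_insert_of_not_indep {e : β} (he : ¬ S.Indep {e}) (A : Finset β) :
    S.rk (insert e A) = S.rk A := by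
  refine le_antisymm ?_ (S.rk_mono (Finset.subset_insert e A))
  obtain ⟨J, hJA, hJ, hJc⟩ := S.exists_indep_card_eq_rk (insert e A)
  have heJ : e ∉ J := fun h => he (S.indep_subset hJ (Finset.singleton_subset_iff.2 h))
  exact hJc ▸ card_le_rk ((Finset.subset_insert_iff_of_notMem heJ).1 hJA) hJ

lemma card_le_mul_rk_of_forall_mem {ι : Type*} [Fintype ι] {J : ι → Finset β}
    (hJ : ∀ i, S.Indep (J i)) (hcov : ∀ x, ∃ i, x ∈ J i) (A : Finset β) :
    A.card ≤ Fintype.card ι * S.rk A :=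
  calc A.card ≤ (Finset.univ.biUnion fun i => A ∩ J i).card :=
        card_le_card fun x hx => by
          obtain ⟨i, hi⟩ := hcov x
          exact mem_biUnion.2 ⟨i, Finset.mem_univ i, Finset.mem_inter.2 ⟨hx, hi⟩⟩
    _ ≤ ∑ i, (A ∩ J i).card := card_biUnion_le
    _ ≤ ∑ _i : ι, S.rk A := sum_le_sum fun i _ =>
        card_le_rk Finset.inter_subset_left (S.indep_subset (hJ i) Finset.inter_subset_right)
    _ = Fintype.card ι * S.rk A := by simp

def contract (e : β) (he : S.Indep {e}) : FinMatroid β where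
  Indep I := e ∉ I ∧ S.Indep (insert e I)
  indep_empty := ⟨Finset.notMem_empty e, by simpa using he⟩
  indep_subset _ _ hJ hIJ :=
    ⟨fun h => hJ.1 (hIJ h), S.indep_subset hJ.2 (Finset.insert_subset_insert e hIJ)⟩
  indep_aug I J hI hJ hlt := by
    obtain ⟨x, hxJ, hxI, hins⟩ := S.indep_aug hI.2 hJ.2
      (by rwa [card_insert_of_notMem hI.1, card_insert_of_notMem hJ.1, add_lt_add_iff_right])
    have hxe : x ≠ e := fun h => hxI (h ▸ Finset.mem_insert_self e I)
    refine ⟨x, (Finset.mem_insert.1 hxJ).resolve_left hxe,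
      fun h => hxI (Finset.mem_insert_of_mem h), by simp [hxe.symm, hI.1], ?_⟩
    rwa [Finset.insert_comm]

lemma rk_contract_add_one {e : β} (he : S.Indep {e}) (A : Finset β) :
    (S.contract e he).rk A + 1 = S.rk (insert e A) := by
  apply le_antisymm
  · obtain ⟨I, hIA, hI, hIc⟩ := (S.contract e he).exists_indep_card_eq_rk A
    have := card_le_rk (Finset.insert_subset_insert e hIA) hI.2
    rwa [card_insert_of_notMem hI.1, hIc] at this
  · obtain ⟨J, heJ, hJA, hJ, hJc⟩ := S.exists_indep_superset_card_eq_rk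
      (Finset.singleton_subset_iff.2 (Finset.mem_insert_self e A)) he
    have heJ : e ∈ J := Finset.singleton_subset_iff.1 heJ
    have hJe : (S.contract e he).Indep (J.erase e) :=
      ⟨Finset.notMem_erase e J, by rwa [Finset.insert_erase heJ]⟩
    have := card_le_rk (by simpa [Finset.subset_insert_iff] using hJA) hJe
    rw [card_erase_of_mem heJ, hJc] at this
    have : 0 < J.card := card_pos.2 ⟨e, heJ⟩
    omega

end Rank

section Intersection

variable {β : Type*} [DecidableEq β] {S₁ S₂ : FinMatroid β} {G : Finset β} {m : ℕ}

lemma le_rk_add_rk_sdiff_comm (h : ∀ A ⊆ G, m ≤ S₁.rk A + S₂.rk (G \ A)) :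
    ∀ A ⊆ G, m ≤ S₂.rk A + S₁.rk (G \ A) := fun A hA => by
  have := h (G \ A) sdiff_subset
  rwa [Finset.sdiff_sdiff_eq_self hA, add_comm] at this

lemma le_rk_add_rk_sdiff_erase_of_not_indep {e : β} (he : ¬ S₁.Indep {e}) (heG : e ∈ G)
    (h : ∀ A ⊆ G, m ≤ S₁.rk A + S₂.rk (G \ A)) :
    ∀ A ⊆ G.erase e, m ≤ S₁.rk A + S₂.rk (G.erase e \ A) := fun A hA => by
  have := h (insert e A) (Finset.insert_subset heG (hA.trans (erase_subset e G)))
  rwa [S₁.rk_insert_of_not_indep he, sdiff_insert, ← erase_sdiff_comm] at this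

/-- A deficient set `A` for the deletion of `e` and a deficient set `B` for its contraction
combine, by submodularity of both ranks, into the deficient set `A ∩ B` or `insert e (A ∪ B)`
for `G` itself. -/
lemma exists_rk_add_rk_sdiff_lt_of_erase_of_contract {e : β} (heG : e ∈ G)
    (h₁ : S₁.Indep {e}) (h₂ : S₂.Indep {e}) {A B : Finset β} (hA : A ⊆ G.erase e)
    (hB : B ⊆ G.erase e) (hAm : S₁.rk A + S₂.rk (G.erase e \ A) < m)
    (hBm : (S₁.contract e h₁).rk B + (S₂.contract e h₂).rk (G.erase e \ B) + 1 < m) :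
    ∃ C ⊆ G, S₁.rk C + S₂.rk (G \ C) < m := by
  by_contra! hno
  have heA : e ∉ A := fun h => Finset.notMem_erase e G (hA h)
  have heB : e ∉ B := fun h => Finset.notMem_erase e G (hB h)
  have hAG : A ⊆ G := hA.trans (erase_subset e G)
  have hBG : B ⊆ G := hB.trans (erase_subset e G)
  have hinter := hno (A ∩ B) (Finset.inter_subset_left.trans hAG)
  have hunion :=
    hno (insert e (A ∪ B)) (Finset.insert_subset heG (Finset.union_subset hAG hBG))
  have hsub₁ := S₁.rk_union_add_rk_inter_le A (insert e B)
  rw [Finset.union_insert, Finset.inter_insert_of_notMem heA] at hsub₁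
  have hsub₂ := S₂.rk_union_add_rk_inter_le (G.erase e \ A) (G \ B)
  have hU : G.erase e \ A ∪ G \ B = G \ (A ∩ B) := by
    ext x
    simp only [Finset.mem_union, Finset.mem_sdiff, Finset.mem_erase, Finset.mem_inter]
    grind
  have hI : G.erase e \ A ∩ (G \ B) = G \ insert e (A ∪ B) := by
    ext x
    simp only [Finset.mem_inter, Finset.mem_sdiff, Finset.mem_erase, Finset.mem_insert,
      Finset.mem_union]
    grind
  rw [hU, hI] at hsub₂
  have hcon₁ := S₁.rk_contract_add_one h₁ B
  have hcon₂ := S₂.rk_contract_add_one h₂ (G.erase e \ B)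
  rw [erase_sdiff_comm, Finset.insert_erase (Finset.mem_sdiff.2 ⟨heG, heB⟩),
    ← erase_sdiff_comm] at hcon₂
  omega

/-- The hard half of Edmonds' matroid intersection theorem. -/
theorem exists_common_indep_le_card (S₁ S₂ : FinMatroid β) (G : Finset β) (m : ℕ)
    (h : ∀ A ⊆ G, m ≤ S₁.rk A + S₂.rk (G \ A)) :
    ∃ I ⊆ G, S₁.Indep I ∧ S₂.Indep I ∧ m ≤ I.card := by
  induction G using Finset.strongInduction generalizing S₁ S₂ m with
  | H G ih =>
  obtain rfl | ⟨e, heG⟩ := G.eq_empty_or_nonempty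
  · refine ⟨∅, subset_rfl, S₁.indep_empty, S₂.indep_empty, ?_⟩
    simpa using h ∅ subset_rfl
  have ih' := ih (G.erase e) (erase_ssubset heG)
  have hsub := erase_subset e G
  by_cases h₁ : S₁.Indep {e}
  swap
  · obtain ⟨I, hI, hI₁, hI₂, hm⟩ :=
      ih' S₁ S₂ m (le_rk_add_rk_sdiff_erase_of_not_indep h₁ heG h)
    exact ⟨I, hI.trans hsub, hI₁, hI₂, hm⟩
  by_cases h₂ : S₂.Indep {e}
  swap
  · obtain ⟨I, hI, hI₂, hI₁, hm⟩ :=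
      ih' S₂ S₁ m (le_rk_add_rk_sdiff_erase_of_not_indep h₂ heG (le_rk_add_rk_sdiff_comm h))
    exact ⟨I, hI.trans hsub, hI₁, hI₂, hm⟩
  by_contra! hno
  obtain ⟨A, hA, hAm⟩ : ∃ A ⊆ G.erase e, S₁.rk A + S₂.rk (G.erase e \ A) < m := by
    by_contra! hdel
    obtain ⟨I, hI, hI₁, hI₂, hm⟩ := ih' S₁ S₂ m hdel
    exact (hno I (hI.trans hsub) hI₁ hI₂).not_ge hm
  obtain ⟨B, hB, hBm⟩ : ∃ B ⊆ G.erase e,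
      (S₁.contract e h₁).rk B + (S₂.contract e h₂).rk (G.erase e \ B) + 1 < m := by
    by_contra! hcon
    obtain ⟨I, hI, hI₁, hI₂, hm⟩ :=
      ih' (S₁.contract e h₁) (S₂.contract e h₂) (m - 1) fun C hC => by
        have := hcon C hC
        omega
    have := hno (insert e I) (Finset.insert_subset heG (hI.trans hsub)) hI₁.2 hI₂.2
    rw [card_insert_of_notMem hI₁.1] at this
    omega
  obtain ⟨C, hC, hCm⟩ :=
    exists_rk_add_rk_sdiff_lt_of_erase_of_contract heG h₁ h₂ hA hB hAm hBm
  exact (h C hC).not_gt hCm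

end Intersection

section Covering

variable {α β ι : Type*} [DecidableEq α] [DecidableEq β] [DecidableEq ι]

def layer (I : Finset (α × ι)) (i : ι) : Finset α :=
  (I.filter (·.2 = i)).image Prod.fst

@[simp]
lemma mem_layer {I : Finset (α × ι)} {i : ι} {x : α} : x ∈ layer I i ↔ (x, i) ∈ I := by
  simp [layer]

lemma card_layer (I : Finset (α × ι)) (i : ι) :
    (layer I i).card = (I.filter (·.2 = i)).card :=
  card_image_of_injOn fun _ hp _ hq h =>
    Prod.ext h ((mem_filter.1 hp).2.trans (mem_filter.1 hq).2.symm)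

lemma card_eq_sum_card_layer [Fintype ι] (I : Finset (α × ι)) :
    I.card = ∑ i, (layer I i).card := by
  simp only [card_layer]
  exact card_eq_sum_card_fiberwise fun p _ => Finset.mem_univ p.2

lemma layer_insert (I : Finset (α × ι)) (x : α) (i j : ι) :
    layer (insert (x, i) I) j = if j = i then insert x (layer I j) else layer I j := by
  ext y
  split_ifs with h <;> simp [h]

/-- The direct sum of copies of `S` indexed by `ι`, on the ground set `α × ι`. -/
def copies (S : FinMatroid α) (ι : Type*) [DecidableEq ι] [Fintype ι] :
    FinMatroid (α × ι) where
  Indep I := ∀ i, S.Indep (layer I i)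
  indep_empty i := by simpa [layer] using S.indep_empty
  indep_subset _ _ hJ hIJ i :=
    S.indep_subset (hJ i) fun _ hx => mem_layer.2 (hIJ (mem_layer.1 hx))
  indep_aug I J hI hJ hlt := by
    rw [card_eq_sum_card_layer I, card_eq_sum_card_layer J] at hlt
    obtain ⟨i, -, hi⟩ := exists_lt_of_sum_lt hlt
    obtain ⟨x, hxJ, hxI, hins⟩ := S.indep_aug (hI i) (hJ i) hi
    refine ⟨(x, i), mem_layer.1 hxJ, mt mem_layer.2 hxI, fun j => ?_⟩
    rw [layer_insert]
    split_ifs with h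
    · exact h ▸ hins
    · exact hI j

/-- The partition matroid whose independent sets meet each fibre of `f` at most once. -/
def unitPartition {γ : Type*} [DecidableEq γ] (f : β → γ) : FinMatroid β where
  Indep I := Set.InjOn f I
  indep_empty := by simp
  indep_subset _ _ hJ hIJ := hJ.mono (Finset.coe_subset.2 hIJ)
  indep_aug I J hI hJ hlt := by
    obtain ⟨y, hyJ, hyI⟩ :=
      exists_mem_notMem_of_card_lt_card (s := I.image f) (t := J.image f) (by
        rwa [card_image_of_injOn hI, card_image_of_injOn hJ])
    obtain ⟨x, hxJ, rfl⟩ := Finset.mem_image.1 hyJ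
    have hxI : x ∉ I := fun h => hyI (Finset.mem_image_of_mem f h)
    refine ⟨x, hxJ, hxI, ?_⟩
    rw [coe_insert, Set.injOn_insert (mem_coe.not.2 hxI)]
    exact ⟨hI, by simpa using hyI⟩

lemma card_image_le_rk_unitPartition {γ : Type*} [DecidableEq γ] (f : β → γ) (X : Finset β) :
    (X.image f).card ≤ (unitPartition f).rk X := by
  obtain ⟨u, huX, hinj, himg⟩ := exists_subset_injOn_image_eq_of_surjOn (f := f) X (X.image f)
    (by rw [coe_image]; exact Set.surjOn_image f X)
  rw [← himg, card_image_of_injOn hinj]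
  exact card_le_rk (Finset.coe_subset.1 huX) hinj

lemma mul_rk_le_rk_copies [Fintype ι] (S : FinMatroid α) (T : Finset α) :
    Fintype.card ι * S.rk T ≤ (S.copies ι).rk (T ×ˢ Finset.univ) := by
  obtain ⟨I, hIT, hI, hIc⟩ := S.exists_indep_card_eq_rk T
  have hlayer : ∀ i, layer (I ×ˢ (Finset.univ : Finset ι)) i = I := fun i => by ext; simp
  have := card_le_rk (S := S.copies ι) (product_subset_product_left hIT)
    fun i => (hlayer i).symm ▸ hI
  rwa [card_product, card_univ, hIc, mul_comm] at this

/-- With `T` the set of elements all of whose copies lie in `A`, the set `A` contains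
`T ×ˢ univ`, and its complement meets the fibre of every element outside `T`. -/
lemma card_le_rk_copies_add_rk_unitPartition [Fintype α] [Fintype ι] (S : FinMatroid α)
    (h : ∀ A : Finset α, A.card ≤ Fintype.card ι * S.rk A) (A : Finset (α × ι)) :
    Fintype.card α ≤
      (S.copies ι).rk A + (unitPartition (Prod.fst : α × ι → α)).rk (Finset.univ \ A) := by
  set T := Finset.univ.filter fun x => ∀ i, (x, i) ∈ A
  have hT : T.card ≤ (S.copies ι).rk A :=
    (h T).trans <| (mul_rk_le_rk_copies S T).trans <| rk_mono _ fun p hp => by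
      simp only [T, mem_product, mem_filter] at hp
      exact hp.1.2 p.2
  have hTc : (Finset.univ \ T).card ≤
      (unitPartition (Prod.fst : α × ι → α)).rk (Finset.univ \ A) := by
    refine le_trans (card_le_card fun x hx => ?_) (card_image_le_rk_unitPartition _ _)
    simp only [T, Finset.mem_sdiff, mem_filter, Finset.mem_univ, true_and, not_forall] at hx
    obtain ⟨i, hi⟩ := hx
    exact Finset.mem_image.2 ⟨(x, i), by simpa using hi, rfl⟩
  have := card_sdiff_add_card_eq_card (Finset.subset_univ T)
  rw [card_univ] at this
  omega

theorem exists_indep_cover_of_card_le_mul_rk [Fintype α] [Fintype ι] (S : FinMatroid α)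
    (h : ∀ A : Finset α, A.card ≤ Fintype.card ι * S.rk A) :
    ∃ J : ι → Finset α, (∀ i, S.Indep (J i)) ∧ ∀ x, ∃ i, x ∈ J i := by
  obtain ⟨I, -, hI₁, hI₂, hI⟩ := exists_common_indep_le_card (S.copies ι)
    (unitPartition Prod.fst) Finset.univ (Fintype.card α)
    fun A _ => card_le_rk_copies_add_rk_unitPartition S h A
  have himg : I.image Prod.fst = Finset.univ :=
    eq_univ_of_card _ <| (card_le_univ _).antisymm (by rwa [card_image_of_injOn hI₂])
  refine ⟨layer I, hI₁, fun x => ?_⟩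
  obtain ⟨p, hp, rfl⟩ := Finset.mem_image.1 (himg ▸ Finset.mem_univ x)
  exact ⟨p.2, mem_layer.2 hp⟩

end Covering

end FinMatroid

namespace Matroid

variable {α : Type*}

section

variable [DecidableEq α]

def toFinMatroid (M : Matroid α) : FinMatroid α where
  Indep I := M.Indep I
  indep_empty := by simp
  indep_subset _ _ hJ hIJ := hJ.subset (Finset.coe_subset.2 hIJ)
  indep_aug I J hI hJ hlt := by
    obtain ⟨x, ⟨hxJ, hxI⟩, hins⟩ :=
      hI.augment hJ (by simpa [encard_coe_eq_coe_finsetCard] using hlt)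
    exact ⟨x, hxJ, hxI, by simpa using hins⟩

lemma mRank_eq_rk_toFinMatroid (M : Matroid α) (A : Finset α) :
    mRank M A = M.toFinMatroid.rk A := by
  refine IsGreatest.csSup_eq ⟨?_, ?_⟩
  · obtain ⟨I, hIA, hI, hIc⟩ := M.toFinMatroid.exists_indep_card_eq_rk A
    exact ⟨I, Finset.coe_subset.2 hIA, hI, by rw [ncard_coe_finset, hIc]⟩
  · rintro n ⟨I, hIA, hI, rfl⟩
    have hfin : I.Finite := A.finite_toSet.subset hIA
    rw [← hfin.coe_toFinset, ncard_coe_finset]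
    exact FinMatroid.card_le_rk (by simpa [← Finset.coe_subset] using hIA)
      (show M.Indep _ by rwa [hfin.coe_toFinset])

end

lemma mRank_pos (M : Matroid α) (hloop : ∀ e : α, M.Indep {e}) {A : Finset α}
    (hA : A.Nonempty) : 0 < mRank M A := by
  classical
  obtain ⟨e, he⟩ := hA
  rw [M.mRank_eq_rk_toFinMatroid]
  exact FinMatroid.card_le_rk (S := M.toFinMatroid) (Finset.singleton_subset_iff.2 he)
    (show M.Indep _ by rw [Finset.coe_singleton]; exact hloop e)

/-- Edmonds' covering theorem, for bases. -/
theorem exists_isBase_cover_iff [Fintype α] (M : Matroid α) (k : ℕ) :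
    (∃ B : Fin k → Set α, (∀ i, M.IsBase (B i)) ∧ ⋃ i, B i = Set.univ) ↔
      ∀ A : Finset α, A.card ≤ k * mRank M A := by
  classical
  simp only [M.mRank_eq_rk_toFinMatroid]
  constructor
  · rintro ⟨B, hB, hcov⟩ A
    have hmem : ∀ x, ∃ i, x ∈ B i := fun x => mem_iUnion.1 (hcov ▸ Set.mem_univ x)
    simpa using M.toFinMatroid.card_le_mul_rk_of_forall_mem
      (J := fun i => Finset.univ.filter (· ∈ B i)) (fun i => (hB i).indep.subset (by simp))
      (by simpa using hmem) A
  · intro h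
    obtain ⟨J, hJ, hcov⟩ :=
      M.toFinMatroid.exists_indep_cover_of_card_le_mul_rk (ι := Fin k) (by simpa using h)
    choose B hB hJB using fun i => (hJ i).exists_isBase_superset
    refine ⟨B, hB, eq_univ_of_forall fun x => ?_⟩
    obtain ⟨i, hi⟩ := hcov x
    exact mem_iUnion.2 ⟨i, hJB i hi⟩

lemma forall_card_le_mul_mRank_iff (M : Matroid α) (hloop : ∀ e : α, M.Indep {e}) (k : ℕ) :
    (∀ A : Finset α, A.card ≤ k * mRank M A) ↔
      ∀ A : Finset α, A.Nonempty → (A.card : ℚ) / mRank M A ≤ k := by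
  refine forall_congr' fun A => ?_
  obtain rfl | hA := A.eq_empty_or_nonempty
  · simp
  rw [div_le_iff₀ (by exact_mod_cast M.mRank_pos hloop hA), ← Nat.cast_mul, Nat.cast_le]
  exact ⟨fun h _ => h, fun h => h hA⟩

end Matroid

theorem stmt_7_general {α : Type*} [Fintype α] (M : Matroid α)
    (hloop : ∀ e : α, M.Indep {e})
    (γ : ℚ)
    (hγub : ∀ A : Finset α, A.Nonempty → (A.card : ℚ) / (mRank M (A : Set α) : ℚ) ≤ γ)
    (hγmax : ∃ A : Finset α, A.Nonempty ∧ (A.card : ℚ) / (mRank M (A : Set α) : ℚ) = γ)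
    (u : ℕ)
    (hu : IsLeast {k : ℕ | ∃ B : Fin k → Set α,
      (∀ i, M.IsBase (B i)) ∧ (⋃ i, B i) = Set.univ} u) :
    (u : ℤ) = ⌈γ⌉ := by
  have hcover : {k : ℕ | ∃ B : Fin k → Set α,
      (∀ i, M.IsBase (B i)) ∧ (⋃ i, B i) = Set.univ} = {k : ℕ | γ ≤ k} := by
    ext k
    rw [Set.mem_ofPred_eq, Set.mem_ofPred_eq, M.exists_isBase_cover_iff,
      M.forall_card_le_mul_mRank_iff hloop]
    obtain ⟨A, hA, hAγ⟩ := hγmax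
    exact ⟨fun h => hAγ ▸ h A hA, fun h B hB => (hγub B hB).trans h⟩
  have hγ : 0 ≤ γ := by
    obtain ⟨A, -, rfl⟩ := hγmax
    positivity
  rw [hcover] at hu
  rw [hu.unique ⟨Nat.le_ceil γ, fun k hk => Nat.ceil_le.2 hk⟩]
  exact Int.natCast_ceil_eq_ceil hγ

theorem stmt_7 {α : Type*} [Fintype α] [Nonempty α] (M : Matroid α) (hE : M.E = Set.univ)
    (hloop : ∀ e : α, M.Indep {e})
    (γ : ℚ)
    (hγub : ∀ A : Finset α, A.Nonempty → (A.card : ℚ) / (mRank M (A : Set α) : ℚ) ≤ γ)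
    (hγmax : ∃ A : Finset α, A.Nonempty ∧ (A.card : ℚ) / (mRank M (A : Set α) : ℚ) = γ)
    (u : ℕ)
    (hu : IsLeast {k : ℕ | ∃ B : Fin k → Set α,
      (∀ i, M.IsBase (B i)) ∧ (⋃ i, B i) = Set.univ} u) :
    (u : ℤ) = ⌈γ⌉ :=
  stmt_7_general M hloop γ hγub hγmax u hu
end

section
/- Let M be a loopless matroid on a finite nonempty set E. Suppose there exist bases B₁, …, B_c of M with B₁ ∪ ⋯ ∪ B_c = E. Then for d = c there exists a map φ : E → S_d = ℝ/dℤ such that for every point x ∈ S_d, the set of elements e with φ(e) lying in the half-open cyclic unit interval [x, x+1) is independent in M. (Thus the circular arboricity is at most the arboricity.) -/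
open Set

/-- `y` lies in the half-open cyclic unit arc `[x, x+1)` of the circle `ℝ/dℤ`. -/
def inUnitArc {d : ℝ} (x y : AddCircle d) : Prop :=
  ∃ t : ℝ, 0 ≤ t ∧ t < 1 ∧ y = x + (t : AddCircle d)

/-! Put every element at the integer point `i` of `ℝ/cℤ`, where `B i` is a base containing it.
A unit arc `[x, x+1)` meets only one of the `c` integer points, so the elements it sees all lie
in a single base. -/

theorem inUnitArc.exists_eq_add {d : ℝ} {x y z : AddCircle d} (hy : inUnitArc x y)
    (hz : inUnitArc x z) : ∃ s : ℝ, |s| < 1 ∧ y = z + s := by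
  obtain ⟨t, ht0, ht1, rfl⟩ := hy
  obtain ⟨u, hu0, hu1, rfl⟩ := hz
  refine ⟨t - u, abs_sub_lt_iff.mpr ⟨by linarith, by linarith⟩, ?_⟩
  rw [AddCircle.coe_sub]
  abel

theorem AddCircle.eq_of_natCast_eq_add {c i j : ℕ} (hi : i < c) (hj : j < c) {s : ℝ}
    (hs : |s| < 1) (h : ((i : ℝ) : AddCircle (c : ℝ)) = (j : ℝ) + s) : i = j := by
  obtain ⟨n, hn⟩ : ∃ n : ℤ, n • (c : ℝ) = i - j - s := by
    rw [← AddCircle.coe_eq_zero_iff, AddCircle.coe_sub, AddCircle.coe_sub, h]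
    abel
  -- `s = i - j - n c` is an integer of absolute value `< 1`, hence `0`.
  have hs_int : s = ((i - j - n * c : ℤ) : ℝ) := by
    push_cast
    rw [zsmul_eq_mul] at hn
    linarith
  rw [hs_int, ← Int.cast_abs, ← Int.cast_one, Int.cast_lt, abs_lt] at hs
  have hn0 : n = 0 := by
    rcases lt_trichotomy n 0 with hn | hn | hn <;> [nlinarith; exact hn; nlinarith]
  subst hn0
  omega

theorem Fin.eq_of_inUnitArc {c : ℕ} {x : AddCircle (c : ℝ)} {i j : Fin c}
    (hi : inUnitArc x (((i : ℕ) : ℝ) : AddCircle (c : ℝ)))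
    (hj : inUnitArc x (((j : ℕ) : ℝ) : AddCircle (c : ℝ))) : i = j := by
  obtain ⟨s, hs, h⟩ := hi.exists_eq_add hj
  exact Fin.ext (AddCircle.eq_of_natCast_eq_add i.isLt j.isLt hs h)

theorem stmt_9_general {α : Type*} (M : Matroid α)
    (c : ℕ) (B : Fin c → Set α)
    (hB : ∀ i, M.IsBase (B i)) (hcover : (⋃ i, B i) = Set.univ) :
    ∃ φ : α → AddCircle (c : ℝ), ∀ x : AddCircle (c : ℝ),
      M.Indep {e : α | inUnitArc x (φ e)} := by
  choose f hf using fun e => mem_iUnion.mp (hcover ▸ mem_univ e)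
  refine ⟨fun e => ((f e : ℕ) : ℝ), fun x => ?_⟩
  rcases eq_empty_or_nonempty {e : α | inUnitArc x (((f e : ℕ) : ℝ) : AddCircle (c : ℝ))}
    with hempty | ⟨e₀, he₀⟩
  · exact hempty ▸ M.empty_indep
  · refine (hB (f e₀)).indep.subset fun e he => ?_
    rw [← Fin.eq_of_inUnitArc he he₀]
    exact hf e

theorem stmt_9 {α : Type*} [Fintype α] [Nonempty α] (M : Matroid α) (hE : M.E = Set.univ)
    (hloop : ∀ e : α, M.Indep {e})
    (c : ℕ) (B : Fin c → Set α)
    (hB : ∀ i, M.IsBase (B i)) (hcover : (⋃ i, B i) = Set.univ) :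
    ∃ φ : α → AddCircle (c : ℝ), ∀ x : AddCircle (c : ℝ),
      M.Indep {e : α | inUnitArc x (φ e)} :=
  stmt_9_general M c B hB hcover
end

section
/- Let M be a loopless matroid on a finite nonempty set E, let d > 0 be real, and suppose φ : E → ℝ/dℤ is such that for every x, the set {e ∈ E | φ(e) ∈ [x, x+1)} is independent in M. Then for d₀ = ⌈d⌉ there exist bases B₁, …, B_{d₀} of M with B₁ ∪ ⋯ ∪ B_{d₀} = E. (Thus Υ(M) ≤ ⌈Υ_c(M)⌉.) -/
/-! The arcs `[k, k+1)` for `k < ⌈d⌉` cover `ℝ/dℤ` (a point represented by `t ∈ [0, d)` lies in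
the arc starting at `⌊t⌋`), so the `⌈d⌉` independent sets `{e | φ e ∈ [k, k+1)}` cover `E`;
extending each of them to a base gives the required bases. -/

open Set

theorem exists_inUnitArc_natCast {d : ℝ} (hd : 0 < d) (y : AddCircle d) :
    ∃ k : Fin ⌈d⌉₊, inUnitArc (((k : ℕ) : ℝ) : AddCircle d) y := by
  have : Fact (0 < d) := ⟨hd⟩
  obtain ⟨t, ⟨ht0, htd⟩, rfl⟩ := AddCircle.eq_coe_Ico y
  have hk : ⌊t⌋₊ < ⌈d⌉₊ := by
    have : (⌊t⌋₊ : ℝ) < ⌈d⌉₊ := (Nat.floor_le ht0).trans_lt (htd.trans_le (Nat.le_ceil d))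
    exact_mod_cast this
  refine ⟨⟨⌊t⌋₊, hk⟩, t - ⌊t⌋₊, sub_nonneg.mpr (Nat.floor_le ht0), ?_, ?_⟩
  · linarith [Nat.lt_floor_add_one t]
  · rw [← AddCircle.coe_add, add_sub_cancel]

theorem Matroid.exists_isBase_cover_of_indep_cover {α ι : Type*} (M : Matroid α)
    (I : ι → Set α) (hI : ∀ i, M.Indep (I i)) (hcover : ⋃ i, I i = univ) :
    ∃ B : ι → Set α, (∀ i, M.IsBase (B i)) ∧ ⋃ i, B i = univ := by
  choose B hB hIB using fun i => (hI i).exists_isBase_superset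
  exact ⟨B, hB, univ_subset_iff.mp (hcover ▸ iUnion_mono hIB)⟩

theorem stmt_10_general {α : Type*} (M : Matroid α)
    (d : ℝ) (hd : 0 < d) (φ : α → AddCircle d)
    (hφ : ∀ x : AddCircle d, M.Indep {e : α | inUnitArc x (φ e)}) :
    ∃ B : Fin ⌈d⌉₊ → Set α, (∀ i, M.IsBase (B i)) ∧ (⋃ i, B i) = Set.univ := by
  refine M.exists_isBase_cover_of_indep_cover _ (fun k => hφ (((k : ℕ) : ℝ) : AddCircle d)) ?_
  exact eq_univ_of_forall fun e => mem_iUnion.mpr (exists_inUnitArc_natCast hd (φ e))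

theorem stmt_10 {α : Type*} [Fintype α] [Nonempty α] (M : Matroid α) (hE : M.E = Set.univ)
    (hloop : ∀ e : α, M.Indep {e})
    (d : ℝ) (hd : 0 < d) (φ : α → AddCircle d)
    (hφ : ∀ x : AddCircle d, M.Indep {e : α | inUnitArc x (φ e)}) :
    ∃ B : Fin ⌈d⌉₊ → Set α, (∀ i, M.IsBase (B i)) ∧ (⋃ i, B i) = Set.univ :=
  stmt_10_general M d hd φ hφ
end

section
/- Let B and B' be two disjoint bases of a matroid M of rank r, with B' = {b'₁, …, b'_r}. Then there is an ordering b₁, …, b_r of the elements of B such that for every i with 0 ≤ i ≤ r, the set {b_{i+1}, …, b_r} ∪ {b'₁, …, b'_i} is a base of M. (Equivalently, in the linear sequence (b₁, …, b_r, b'₁, …, b'_r), every r consecutive elements form a base.) -/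
/-!
Enlarge `{b'₁, …, b'ᵢ}` one element at a time, keeping a base. At step `i + 1` the current base is
`(B \ {b₁, …, bᵢ}) ∪ {b'₁, …, b'ᵢ}`; adding `b'ᵢ₊₁` and applying the reverse exchange axiom
(the exchange axiom in the dual matroid) removes an element of the base outside `B'`, hence an
element of `B` not removed before, and that element is `bᵢ₊₁`. After `r` steps the removed
elements are `r` distinct elements of the `r`-element set `B`, so they enumerate it.
-/

open Set Function

lemma Fin.setOf_val_lt_add_one {n k : ℕ} (hk : k < n) :
    {j : Fin n | (j : ℕ) < k + 1} = insert ⟨k, hk⟩ {j : Fin n | (j : ℕ) < k} := by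
  ext j
  simp only [mem_ofPred_eq, mem_insert_iff, Fin.ext_iff]
  omega

namespace Matroid

variable {α : Type*} {M : Matroid α} {B₁ B₂ B B' : Set α}

theorem IsBase.rev_exchange {f : α} (hB₁ : M.IsBase B₁) (hB₂ : M.IsBase B₂) (hf : f ∈ B₂ \ B₁) :
    ∃ e ∈ B₁ \ B₂, M.IsBase (insert f (B₁ \ {e})) := by
  have hfE : f ∈ M.E := hB₂.subset_ground hf.1
  obtain ⟨e, ⟨⟨heE, heB₂⟩, heB₁⟩, hdual⟩ := hB₁.compl_isBase_dual.exchange hB₂.compl_isBase_dual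
    ⟨⟨hfE, hf.2⟩, fun h ↦ h.2 hf.1⟩
  have heB₁ : e ∈ B₁ := by_contra fun h ↦ heB₁ ⟨heE, h⟩
  refine ⟨e, ⟨heB₁, heB₂⟩, ?_⟩
  convert hdual.compl_isBase_of_dual using 1
  ext x
  have hxE := hB₁.subset_ground (a := x)
  have hef : e ≠ f := fun h ↦ heB₂ (h ▸ hf.1)
  simp only [mem_insert_iff, mem_sdiff, mem_singleton_iff]
  grind

theorem IsBase.exists_exchange_sequence (hB : M.IsBase B) (hB' : M.IsBase B') {n : ℕ}
    {f : Fin n → α} (hf : Injective f) (hfB : range f ⊆ B' \ B) {k : ℕ} (hk : k ≤ n) :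
    ∃ e : Fin n → α, InjOn e {j | (j : ℕ) < k} ∧ e '' {j | (j : ℕ) < k} ⊆ B ∧
      ∀ i ≤ k, M.IsBase ((B \ e '' {j | (j : ℕ) < i}) ∪ f '' {j | (j : ℕ) < i}) := by
  induction k with
  | zero => exact ⟨f, by simp, by simp, fun i hi ↦ by simpa [Nat.le_zero.mp hi] using hB⟩
  | succ k ih =>
    obtain ⟨e, he_inj, heB, hbase⟩ := ih (by omega)
    set K : Fin n := ⟨k, hk⟩
    set E := e '' {j | (j : ℕ) < k}
    set F := f '' {j | (j : ℕ) < k}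
    have hFB' : F ⊆ B' := (image_subset_range _ _).trans (hfB.trans sdiff_subset)
    have hfK : f K ∈ B' \ ((B \ E) ∪ F) := by
      refine ⟨(hfB (mem_range_self K)).1, ?_⟩
      rintro (h | ⟨j, hj, hjK⟩)
      · exact (hfB (mem_range_self K)).2 h.1
      · exact hj.ne (congrArg Fin.val (hf hjK))
    obtain ⟨x, ⟨hxC, hxB'⟩, hx⟩ := (hbase k le_rfl).rev_exchange hB' hfK
    have hxBE : x ∈ B \ E := hxC.resolve_right fun h ↦ hxB' (hFB' h)
    have himage : ∀ i ≤ k, update e K x '' {j | (j : ℕ) < i} = e '' {j | (j : ℕ) < i} :=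
      fun i hi ↦ image_congr fun j hj ↦ update_of_ne (by rintro rfl; simp [K] at hj; omega) _ _
    have hKE : update e K x '' {j | (j : ℕ) < k + 1} = insert x E := by
      rw [Fin.setOf_val_lt_add_one hk, image_insert_eq, update_self, himage k le_rfl]
    refine ⟨update e K x, ?_, ?_, fun i hi ↦ ?_⟩
    · rw [Fin.setOf_val_lt_add_one hk, injOn_insert (by simp), himage k le_rfl, update_self]
      exact ⟨he_inj.congr fun j hj ↦ (update_of_ne (by rintro rfl; simp [K] at hj) _ _).symm, hxBE.2⟩
    · rw [hKE]
      exact insert_subset hxBE.1 heB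
    · obtain hi | rfl := hi.lt_or_eq
      · rw [himage i (Nat.lt_succ_iff.mp hi)]
        exact hbase i (Nat.lt_succ_iff.mp hi)
      · convert hx using 1
        rw [hKE, Fin.setOf_val_lt_add_one hk, image_insert_eq]
        ext y
        have hyB' : y ∈ F → y ∈ B' := fun h ↦ hFB' h
        simp only [mem_insert_iff, mem_union, mem_sdiff, mem_singleton_iff]
        grind

end Matroid

theorem stmt_18 {α : Type*} (M : Matroid α) (r : ℕ) (B B' : Set α)
    (hB : M.IsBase B) (hB' : M.IsBase B') (hdisj : Disjoint B B')
    (b' : Fin r → α) (hb'inj : Function.Injective b') (hb'range : Set.range b' = B') :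
    ∃ b : Fin r → α, Function.Injective b ∧ Set.range b = B ∧
      ∀ i : ℕ, i ≤ r →
        M.IsBase ((b '' {j : Fin r | i ≤ (j : ℕ)}) ∪ (b' '' {j : Fin r | (j : ℕ) < i})) := by
  obtain ⟨b, hb_injOn, hbB, hbase⟩ := hB.exists_exchange_sequence hB' hb'inj
    (by rw [hb'range, hdisj.symm.sdiff_eq_left]) le_rfl
  have hb_inj : Injective b := injOn_univ.mp (by simpa using hb_injOn)
  have hb_range : range b = B := by
    refine (finite_range b).eq_of_subset_of_encard_le (by simpa using hbB) ?_
    rw [hB.encard_eq_encard_of_isBase hB', ← hb'range, ← image_univ, ← image_univ,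
      hb'inj.encard_image, hb_inj.encard_image]
  refine ⟨b, hb_inj, hb_range, fun i hi ↦ ?_⟩
  have hcompl : {j : Fin r | i ≤ (j : ℕ)} = {j : Fin r | (j : ℕ) < i}ᶜ := by ext; simp
  rw [hcompl, image_compl_eq_range_sdiff_image hb_inj, hb_range]
  exact hbase i hi
end
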